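/- Let P be a random variable, and for each k ≥ 0 let Y_k be random variables with E[|Y_k − Y_{k−1}|] summable (Y_{−1} := 0) and E[Y_k] → E[P] as k → ∞. Let N be a ℤ≥0-valued random variable independent of (Y_k) with P(N ≥ k) > 0 for all k. Then the estimator Z = Σ_{k=0}^{N} (Y_k − Y_{k−1}) / P(N ≥ k) satisfies E[Z] = lim_{k→∞} E[Y_k] = E[P], i.e., Z is unbiased for E[P]. -/

import Mathlib

open MeasureTheory ProbabilityTheory

theorem stmt3 {Ω : Type*} [MeasurableSpace Ω] (Pr : Measure Ω) [IsProbabilityMeasure Pr]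
    (P : Ω → ℝ) (Y : ℕ → Ω → ℝ) (N : Ω → ℕ) (D : ℕ → Ω → ℝ) (Z : Ω → ℝ)
    (hPint : Integrable P Pr)
    (hYint : ∀ k, Integrable (Y k) Pr)
    (hD0 : ∀ ω, D 0 ω = Y 0 ω)
    (hDk : ∀ k ω, D (k + 1) ω = Y (k + 1) ω - Y k ω)
    (hsum : Summable fun k => ∫ ω, |D k ω| ∂Pr)
    (hlim : Filter.Tendsto (fun k => ∫ ω, Y k ω ∂Pr) Filter.atTop
      (nhds (∫ ω, P ω ∂Pr)))
    (hNmeas : Measurable N)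
    (hindep : IndepFun N (fun ω k => D k ω) Pr)
    (hpos : ∀ k, 0 < (Pr {ω | k ≤ N ω}).toReal)
    (hZ : ∀ ω, Z ω = ∑ k ∈ Finset.range (N ω + 1),
      D k ω / (Pr {ω' | k ≤ N ω'}).toReal)
    (hZint : Integrable Z Pr) :
    ∫ ω, Z ω ∂Pr = ∫ ω, P ω ∂Pr := by
  set p : ℕ → ℝ := fun k => (Pr {ω | k ≤ N ω}).toReal with hp
  -- integrability of D k
  have hDint : ∀ k, Integrable (D k) Pr := by
    intro k
    cases k with
    | zero => exact (hYint 0).congr (Filter.Eventually.of_forall fun ω => (hD0 ω).symm)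
    | succ n =>
      exact ((hYint (n+1)).sub (hYint n)).congr
        (Filter.Eventually.of_forall fun ω => (hDk n ω).symm)
  -- the indicator functions
  set I : ℕ → Ω → ℝ := fun k ω => if k ≤ N ω then (1:ℝ) else 0 with hI
  have hIind : ∀ k, I k = Set.indicator {ω | k ≤ N ω} (fun _ => (1:ℝ)) := by
    intro k; funext ω
    by_cases h : k ≤ N ω <;> simp [hI, Set.indicator, h]
  have hmeas_set : ∀ k, MeasurableSet {ω | k ≤ N ω} := by
    intro k
    exact hNmeas measurableSet_Ici
  have hIint : ∀ k, Integrable (I k) Pr := by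
    intro k
    rw [hIind k]
    exact (integrable_const (1:ℝ)).indicator (hmeas_set k)
  have hIintegral : ∀ k, ∫ ω, I k ω ∂Pr = p k := by
    intro k
    rw [hIind k]
    rw [integral_indicator_const (1:ℝ) (hmeas_set k)]
    simp [hp, measureReal_def]
  -- independence of I k and D k
  have hIk : ∀ k, IndepFun (I k) (D k) Pr := by
    intro k
    have : I k = (fun n : ℕ => if k ≤ n then (1:ℝ) else 0) ∘ N := rfl
    rw [this]
    have : D k = (fun f : ℕ → ℝ => f k) ∘ (fun ω k => D k ω) := rfl
    rw [this]
    exact hindep.comp (measurable_from_top) (measurable_pi_apply k)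
  have hIkabs : ∀ k, IndepFun (I k) (fun ω => |D k ω|) Pr := by
    intro k
    have : (fun ω => |D k ω|) = (fun x : ℝ => |x|) ∘ (D k) := rfl
    rw [this]
    exact (hIk k).comp measurable_id measurable_abs
  -- key integrals
  have hmul : ∀ k, ∫ ω, I k ω * D k ω ∂Pr = p k * ∫ ω, D k ω ∂Pr := by
    intro k
    have := (hIk k).integral_mul_eq_mul_integral (hIint k).aestronglyMeasurable (hDint k).aestronglyMeasurable
    simpa [Pi.mul_apply, hIintegral k] using this
  have habsint : ∀ k, Integrable (fun ω => |D k ω|) Pr := fun k => (hDint k).abs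
  have hmulabs : ∀ k, ∫ ω, I k ω * |D k ω| ∂Pr = p k * ∫ ω, |D k ω| ∂Pr := by
    intro k
    have := (hIkabs k).integral_mul_eq_mul_integral (hIint k).aestronglyMeasurable
      (habsint k).aestronglyMeasurable
    simpa [Pi.mul_apply, hIintegral k] using this
  -- the summands
  set f : ℕ → Ω → ℝ := fun k ω => I k ω * D k ω / p k with hf
  have hfint : ∀ k, Integrable (f k) Pr := by
    intro k
    exact (((hIk k).integrable_mul (hIint k) (hDint k)).div_const (p k))
  have hfnorm : ∀ k, ∫ ω, ‖f k ω‖ ∂Pr = ∫ ω, |D k ω| ∂Pr := by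
    intro k
    have h1 : ∀ ω, ‖f k ω‖ = I k ω * |D k ω| / p k := by
      intro ω
      by_cases h : k ≤ N ω
      · simp [hf, hI, h, Real.norm_eq_abs, abs_div, abs_of_nonneg (show 0 ≤ p k from (hpos k).le)]
      · simp [hf, hI, h]
    simp_rw [h1]
    rw [integral_div, hmulabs k]
    exact mul_div_cancel_left₀ _ (hpos k).ne'
  have hfsum : Summable fun k => ∫ ω, ‖f k ω‖ ∂Pr := by
    simpa only [hfnorm] using hsum
  -- Z is the tsum of f
  have hZtsum : ∀ ω, Z ω = ∑' k, f k ω := by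
    intro ω
    rw [hZ ω]
    rw [tsum_eq_sum (s := Finset.range (N ω + 1))]
    · apply Finset.sum_congr rfl
      intro k hk
      rw [Finset.mem_range] at hk
      have : k ≤ N ω := Nat.lt_succ_iff.mp hk
      simp [hf, hI, this, hp]
    · intro k hk
      rw [Finset.mem_range] at hk
      have : ¬ k ≤ N ω := by omega
      simp [hf, hI, this]
  -- swap integral and tsum
  have hswap : ∫ ω, Z ω ∂Pr = ∑' k, ∫ ω, f k ω ∂Pr := by
    rw [show (fun ω => Z ω) = fun ω => ∑' k, f k ω from funext hZtsum] at *
    exact (integral_tsum_of_summable_integral_norm hfint hfsum).symm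
  have hfintegral : ∀ k, ∫ ω, f k ω ∂Pr = ∫ ω, D k ω ∂Pr := by
    intro k
    simp only [hf]
    rw [integral_div, hmul k]
    exact mul_div_cancel_left₀ _ (hpos k).ne'
  rw [hswap]
  simp_rw [hfintegral]
  -- now show ∑' k, ∫ D k = ∫ P
  have hDsum : Summable fun k => ∫ ω, D k ω ∂Pr := by
    apply Summable.of_norm_bounded hsum
    intro k
    calc ‖∫ ω, D k ω ∂Pr‖ ≤ ∫ ω, ‖D k ω‖ ∂Pr := norm_integral_le_integral_norm _
    _ = ∫ ω, |D k ω| ∂Pr := by simp [Real.norm_eq_abs]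
  have hpartial : ∀ n, ∑ k ∈ Finset.range (n + 1), ∫ ω, D k ω ∂Pr = ∫ ω, Y n ω ∂Pr := by
    intro n
    induction n with
    | zero =>
      simp only [zero_add, Finset.range_one, Finset.sum_singleton]
      exact integral_congr_ae (Filter.Eventually.of_forall hD0)
    | succ m ih =>
      rw [Finset.sum_range_succ, ih]
      have : ∫ ω, D (m+1) ω ∂Pr = ∫ ω, (Y (m+1) ω - Y m ω) ∂Pr :=
        integral_congr_ae (Filter.Eventually.of_forall (hDk m))
      rw [this, integral_sub (hYint (m+1)) (hYint m)]
      ring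
  have h1 : Filter.Tendsto (fun n => ∑ k ∈ Finset.range (n+1), ∫ ω, D k ω ∂Pr)
      Filter.atTop (nhds (∑' k, ∫ ω, D k ω ∂Pr)) :=
    (hDsum.hasSum.tendsto_sum_nat).comp (Filter.tendsto_add_atTop_nat 1)
  have h2 : Filter.Tendsto (fun n => ∑ k ∈ Finset.range (n+1), ∫ ω, D k ω ∂Pr)
      Filter.atTop (nhds (∫ ω, P ω ∂Pr)) := by
    simpa only [hpartial] using hlim
  exact tendsto_nhds_unique h1 h2
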